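/- arXiv:1710.08848 — 2 statements merged into one kernel-verified Lean document; each statement's English description precedes it below -/
import Mathlib

section
/- There exists a constant C, depending only on β, 𝗋, 𝗉, m₋, m₊ and m̄ (and not on N, on the mass configuration, or on time), such that for every N ≥ 2, every mass configuration with m₋ ≤ m_x ≤ m₊, and every s ≥ 0: Σ_{x=1}^{N−1} r̄_x(s)² ≤ C N, Σ_{x=1}^N p̄_x(s)² ≤ C N, Σ_{x=1}^N (r̄_x(s) − r̄_{x−1}(s))² ≤ C/N (with r̄_0 = r̄_N = 0), and Σ_{x=1}^{N−1} (p̄_{x+1}(s)/m_{x+1} − p̄_x(s)/m_x)² ≤ C/N. -/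
open Finset

/-- The disordered harmonic chain dynamics on `{1,…,N}`: `r` has components `1 ≤ x ≤ N-1`
(with the convention `r_0 = r_N = 0`) and `p` has components `1 ≤ x ≤ N`. -/
def IsChainSolution (N : ℕ) (m : ℕ → ℝ) (r p : ℝ → ℕ → ℝ) : Prop :=
  (∀ t : ℝ, r t 0 = 0) ∧ (∀ t : ℝ, r t N = 0) ∧
  (∀ (t : ℝ) (x : ℕ), 1 ≤ x → x ≤ N - 1 →
    HasDerivAt (fun s => r s x) (p t (x + 1) / m (x + 1) - p t x / m x) t) ∧
  (∀ (t : ℝ) (x : ℕ), 1 ≤ x → x ≤ N →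
    HasDerivAt (fun s => p s x) (r t x - r t (x - 1)) t)


/-!
The energy `∑ p_x² / m_x + ∑ r_x²` is conserved by the chain dynamics: its time derivative is a
summation by parts that vanishes because `r_0 = r_N = 0`. The time derivatives
`(ṙ, ṗ) = (∇(p/m), ∇*r)` solve the same dynamics, so their energy is conserved as well. At time `0`
the first energy is `O(N)` because the profiles are bounded, and the second is `O(1/N)` because
they are Lipschitz, so each increment is `O(1/N)`. Since `m₋ ≤ m_x ≤ m₊`, the four sums are
controlled by these two energies.
-/

lemma sum_Icc_one_eq_sum_range (f : ℕ → ℝ) (n : ℕ) :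
    ∑ x ∈ Icc 1 n, f x = ∑ x ∈ range n, f (x + 1) := by
  rw [range_eq_Ico, sum_Ico_add', ← Ico_add_one_right_eq_Icc]

lemma sum_mul_sub_add_sum_mul_sub_eq_zero (a b : ℕ → ℝ) (N : ℕ) (h0 : a 0 = 0) (hN : a N = 0) :
    ∑ x ∈ Icc 1 N, b x * (a x - a (x - 1)) + ∑ x ∈ Icc 1 (N - 1), a x * (b (x + 1) - b x)
      = 0 := by
  obtain _ | n := N
  · simp
  simp only [sum_Icc_one_eq_sum_range, Nat.add_sub_cancel, mul_sub, sum_sub_distrib]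
  rw [sum_range_succ, sum_range_succ' (fun x => b (x + 1) * a x), hN, h0]
  simp only [mul_comm (b _) (a _)]
  ring

noncomputable def chainEnergy (N : ℕ) (m r p : ℕ → ℝ) : ℝ :=
  ∑ x ∈ Icc 1 N, p x ^ 2 / m x + ∑ x ∈ Icc 1 (N - 1), r x ^ 2

/-- `∇(p/m)`, the time derivative of `r`; it is set to `0` off the bonds `1, …, N - 1` so that it
obeys the boundary convention of `IsChainSolution` for `r`. -/
noncomputable def velocityDiff (N : ℕ) (m p : ℕ → ℝ) (x : ℕ) : ℝ :=
  if 1 ≤ x ∧ x ≤ N - 1 then p (x + 1) / m (x + 1) - p x / m x else 0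

def stretchDiff (r : ℕ → ℝ) (x : ℕ) : ℝ := r x - r (x - 1)

lemma velocityDiff_of_mem {N : ℕ} {x : ℕ} (m p : ℕ → ℝ) (hx : x ∈ Icc 1 (N - 1)) :
    velocityDiff N m p x = p (x + 1) / m (x + 1) - p x / m x :=
  if_pos (mem_Icc.1 hx)

namespace IsChainSolution

variable {N : ℕ} {m : ℕ → ℝ} {r p : ℝ → ℕ → ℝ}

lemma hasDerivAt_chainEnergy (h : IsChainSolution N m r p) (t : ℝ) :
    HasDerivAt (fun s => chainEnergy N m (r s) (p s)) 0 t := by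
  obtain ⟨h0, hN, hr, hp⟩ := h
  have hP := HasDerivAt.fun_sum (u := Icc 1 N) fun x hx =>
    ((hp t x (mem_Icc.1 hx).1 (mem_Icc.1 hx).2).pow 2).div_const (m x)
  have hR := HasDerivAt.fun_sum (u := Icc 1 (N - 1)) fun x hx =>
    (hr t x (mem_Icc.1 hx).1 (mem_Icc.1 hx).2).pow 2
  refine (hP.add hR).congr_deriv ?_
  have hparts := sum_mul_sub_add_sum_mul_sub_eq_zero (r t) (fun x => p t x / m x) N (h0 t) (hN t)
  rw [← mul_zero 2, ← hparts, mul_add, mul_sum, mul_sum]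
  congr 1 <;> refine sum_congr rfl fun x _ => ?_ <;> push_cast <;> ring

lemma chainEnergy_eq (h : IsChainSolution N m r p) (t : ℝ) :
    chainEnergy N m (r t) (p t) = chainEnergy N m (r 0) (p 0) :=
  is_const_of_deriv_eq_zero (fun s => (h.hasDerivAt_chainEnergy s).differentiableAt)
    (fun s => (h.hasDerivAt_chainEnergy s).deriv) t 0

lemma hasDerivAt_stretch (h : IsChainSolution N m r p) (t : ℝ) {x : ℕ} (hx : x ≤ N) :
    HasDerivAt (fun s => r s x) (velocityDiff N m (p t) x) t := by
  obtain ⟨h0, hN, hr, -⟩ := h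
  by_cases hbulk : 1 ≤ x ∧ x ≤ N - 1
  · rw [velocityDiff, if_pos hbulk]
    exact hr t x hbulk.1 hbulk.2
  · have hboundary : (fun s => r s x) = fun _ => 0 := by
      obtain rfl | rfl : x = 0 ∨ x = N := by omega
      exacts [funext h0, funext hN]
    rw [velocityDiff, if_neg hbulk, hboundary]
    exact hasDerivAt_const t 0

lemma diff (h : IsChainSolution N m r p) :
    IsChainSolution N m (fun t => velocityDiff N m (p t)) (fun t => stretchDiff (r t)) := by
  refine ⟨fun _ => if_neg (by omega), fun _ => if_neg (by omega), ?_, ?_⟩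
  · intro t x hx1 hx2
    have hx : x ∈ Icc 1 (N - 1) := mem_Icc.2 ⟨hx1, hx2⟩
    simp only [velocityDiff_of_mem m _ hx]
    exact ((h.2.2.2 t (x + 1) (by omega) (by omega)).div_const _).sub
      ((h.2.2.2 t x hx1 (by omega)).div_const _)
  · intro t x hx1 hx2
    exact (h.hasDerivAt_stretch t hx2).sub (h.hasDerivAt_stretch t (by omega))

end IsChainSolution

section EnergyBounds

variable {N : ℕ} {m r p : ℕ → ℝ}

lemma sum_sq_le_chainEnergy_of_nonneg (hm : ∀ x, 0 ≤ m x) :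
    ∑ x ∈ Icc 1 (N - 1), r x ^ 2 ≤ chainEnergy N m r p :=
  le_add_of_nonneg_left (sum_nonneg fun x _ => div_nonneg (sq_nonneg _) (hm x))

lemma sum_sq_le_mul_chainEnergy {M : ℝ} (hm : ∀ x, 0 < m x) (hM : ∀ x, m x ≤ M) :
    ∑ x ∈ Icc 1 N, p x ^ 2 ≤ M * chainEnergy N m r p := by
  have hM0 : 0 ≤ M := (hm 0).le.trans (hM 0)
  calc ∑ x ∈ Icc 1 N, p x ^ 2 ≤ ∑ x ∈ Icc 1 N, M * (p x ^ 2 / m x) := by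
        refine sum_le_sum fun x _ => ?_
        rw [mul_div_left_comm]
        exact le_mul_of_one_le_right (sq_nonneg _) ((one_le_div (hm x)).2 (hM x))
    _ = M * ∑ x ∈ Icc 1 N, p x ^ 2 / m x := (mul_sum _ _ _).symm
    _ ≤ M * chainEnergy N m r p :=
        mul_le_mul_of_nonneg_left (le_add_of_nonneg_right (sum_nonneg fun x _ => sq_nonneg _)) hM0

lemma sum_sq_le_of_chainEnergy_le {mminus mplus c : ℝ} (hm0 : 0 < mminus)
    (hm : ∀ x, m x ∈ Set.Icc mminus mplus) (hE : chainEnergy N m r p ≤ c) :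
    ∑ x ∈ Icc 1 (N - 1), r x ^ 2 ≤ (1 + mplus) * c ∧
      ∑ x ∈ Icc 1 N, p x ^ 2 ≤ (1 + mplus) * c := by
  have hmpos x : 0 < m x := hm0.trans_le (hm x).1
  have hmplus : 0 ≤ mplus := (hmpos 0).le.trans (hm 0).2
  have hr := (sum_sq_le_chainEnergy_of_nonneg (p := p) fun x => (hmpos x).le).trans hE
  have hc : 0 ≤ c := (sum_nonneg fun x _ => sq_nonneg (r x)).trans hr
  have hp := (sum_sq_le_mul_chainEnergy (r := r) hmpos fun x => (hm x).2).trans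
    (mul_le_mul_of_nonneg_left hE hmplus)
  constructor <;> nlinarith

lemma sum_sq_le_card_mul_sq {ι : Type*} {s : Finset ι} {f : ι → ℝ} {B : ℝ}
    (hf : ∀ x ∈ s, |f x| ≤ B) : ∑ x ∈ s, f x ^ 2 ≤ #s * B ^ 2 := by
  simpa using sum_le_card_nsmul s _ _ fun x hx =>
    sq_le_sq' (abs_le.1 (hf x hx)).1 (abs_le.1 (hf x hx)).2

lemma chainEnergy_le_of_abs_le {a P R : ℝ} (ha : 0 < a) (hm : ∀ x, a ≤ m x)
    (hp : ∀ x ∈ Icc 1 N, |p x| ≤ P) (hr : ∀ x ∈ Icc 1 (N - 1), |r x| ≤ R) :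
    chainEnergy N m r p ≤ (P ^ 2 / a + R ^ 2) * N := by
  have hpsum : ∑ x ∈ Icc 1 N, p x ^ 2 / m x ≤ P ^ 2 / a * N := calc
    _ ≤ ∑ x ∈ Icc 1 N, p x ^ 2 / a :=
        sum_le_sum fun x _ => div_le_div_of_nonneg_left (sq_nonneg _) ha (hm x)
    _ = (∑ x ∈ Icc 1 N, p x ^ 2) / a := (sum_div _ _ _).symm
    _ ≤ N * P ^ 2 / a := by
        gcongr
        simpa using sum_sq_le_card_mul_sq hp
    _ = P ^ 2 / a * N := by ring
  have hrsum : ∑ x ∈ Icc 1 (N - 1), r x ^ 2 ≤ R ^ 2 * N := calc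
    _ ≤ (N - 1 : ℕ) * R ^ 2 := by simpa using sum_sq_le_card_mul_sq hr
    _ = R ^ 2 * (N - 1 : ℕ) := mul_comm _ _
    _ ≤ R ^ 2 * N := by gcongr; exact_mod_cast N.sub_le 1
  rw [add_mul]
  exact add_le_add hpsum hrsum

end EnergyBounds

lemma natCast_div_mem_Icc {x N : ℕ} (hx : x ≤ N) : (x : ℝ) / N ∈ Set.Icc (0 : ℝ) 1 :=
  ⟨by positivity, div_le_one_of_le₀ (by exact_mod_cast hx) (Nat.cast_nonneg N)⟩

lemma LipschitzOnWith.abs_sub_le_of_grid {f : ℝ → ℝ} {K : NNReal}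
    (hf : LipschitzOnWith K f (Set.Icc 0 1)) {N x : ℕ} (hx : 1 ≤ x) (hxN : x ≤ N) :
    |f (x / N) - f ((x - 1 : ℕ) / N)| ≤ K / N := by
  have h := hf.dist_le_mul _ (natCast_div_mem_Icc hxN) _
    (natCast_div_mem_Icc ((x.sub_le 1).trans hxN))
  have hstep : dist ((x : ℝ) / N) ((x - 1 : ℕ) / N) = 1 / N := by
    rw [Real.dist_eq, ← sub_div, Nat.cast_sub hx, sub_sub_cancel, Nat.cast_one, abs_div, abs_one,
      Nat.abs_cast]
  rwa [hstep, Real.dist_eq, mul_one_div] at h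

section Sampling

variable {N : ℕ} {m : ℕ → ℝ} {rr pp : ℝ → ℝ} {r p : ℕ → ℝ} {mminus mplus mbar : ℝ}

lemma chainEnergy_le_of_sample (hm0 : 0 < mminus) (hm : ∀ x, m x ∈ Set.Icc mminus mplus)
    (hmbar : 0 < mbar) {Mr Mp : ℝ} (hMr : ∀ y ∈ Set.Icc (0 : ℝ) 1, ‖rr y‖ ≤ Mr)
    (hMp : ∀ y ∈ Set.Icc (0 : ℝ) 1, ‖pp y‖ ≤ Mp)
    (hr : ∀ x : ℕ, 1 ≤ x → x ≤ N - 1 → r x = rr ((x : ℝ) / N))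
    (hp : ∀ x : ℕ, 1 ≤ x → x ≤ N → p x = m x * pp ((x : ℝ) / N) / mbar) :
    chainEnergy N m r p ≤ ((mplus * Mp / mbar) ^ 2 / mminus + Mr ^ 2) * N := by
  refine chainEnergy_le_of_abs_le hm0 (fun x => (hm x).1) (fun x hx => ?_) (fun x hx => ?_)
  · obtain ⟨hx1, hxN⟩ := mem_Icc.1 hx
    have hmx : 0 < m x := hm0.trans_le (hm x).1
    rw [hp x hx1 hxN, abs_div, abs_mul, abs_of_pos hmx, abs_of_pos hmbar]
    gcongr
    exacts [hmx.le.trans (hm x).2, (hm x).2, hMp _ (natCast_div_mem_Icc hxN)]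
  · obtain ⟨hx1, hxN⟩ := mem_Icc.1 hx
    rw [hr x hx1 hxN]
    exact hMr _ (natCast_div_mem_Icc (hxN.trans (N.sub_le 1)))

lemma chainEnergy_diff_le_of_sample (hm0 : 0 < mminus) (hm : ∀ x, mminus ≤ m x)
    (hmbar : 0 < mbar) {Lr Lp : NNReal} (hLr : LipschitzOnWith Lr rr (Set.Icc 0 1))
    (hLp : LipschitzOnWith Lp pp (Set.Icc 0 1)) (hr : ∀ x ≤ N, r x = rr ((x : ℝ) / N))
    (hp : ∀ x : ℕ, 1 ≤ x → x ≤ N → p x = m x * pp ((x : ℝ) / N) / mbar) :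
    chainEnergy N m (velocityDiff N m p) (stretchDiff r)
      ≤ (Lr ^ 2 / mminus + (Lp / mbar) ^ 2) / N := calc
  _ ≤ ((Lr / N) ^ 2 / mminus + (Lp / N / mbar) ^ 2) * N := by
      refine chainEnergy_le_of_abs_le hm0 hm (fun x hx => ?_) (fun x hx => ?_)
      · obtain ⟨hx1, hxN⟩ := mem_Icc.1 hx
        rw [stretchDiff, hr x hxN, hr (x - 1) (by omega)]
        exact hLr.abs_sub_le_of_grid hx1 hxN
      · obtain ⟨hx1, hxN⟩ := mem_Icc.1 hx
        have hcancel (y : ℕ) (c : ℝ) : m y * c / mbar / m y = c / mbar := by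
          field_simp [(hm0.trans_le (hm y)).ne']
        rw [velocityDiff_of_mem m p hx, hp (x + 1) (by omega) (by omega), hp x hx1 (by omega),
          hcancel, hcancel, ← sub_div, abs_div, abs_of_pos hmbar]
        gcongr
        simpa using hLp.abs_sub_le_of_grid (x := x + 1) (by omega) (by omega)
  _ = (Lr ^ 2 / mminus + (Lp / mbar) ^ 2) / N := by
      rcases N.eq_zero_or_pos with rfl | hN
      · simp
      · field_simp

end Sampling

lemma IsChainSolution.eq_sample_of_le {N : ℕ} {m : ℕ → ℝ} {r p : ℝ → ℕ → ℝ} {rr : ℝ → ℝ}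
    (h : IsChainSolution N m r p) (hrr0 : rr 0 = 0) (hrr1 : rr 1 = 0) {t : ℝ}
    (hr : ∀ x : ℕ, 1 ≤ x → x ≤ N - 1 → r t x = rr ((x : ℝ) / N)) :
    ∀ x ≤ N, r t x = rr ((x : ℝ) / N) := by
  intro x hx
  rcases Nat.eq_zero_or_pos x with rfl | hx1
  · simp [h.1 t, hrr0]
  rcases hx.eq_or_lt with rfl | hxN
  · rw [h.2.1 t, div_self (by positivity), hrr1]
  · exact hr x hx1 (by omega)

theorem stmt1_general (rr pp : ℝ → ℝ)
    (hrrc : ContDiffOn ℝ 1 rr (Set.Icc 0 1)) (hrr0 : rr 0 = 0) (hrr1 : rr 1 = 0)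
    (hppc : ContDiffOn ℝ 1 pp (Set.Icc 0 1))
    (mminus mplus mbar : ℝ) (hm0 : 0 < mminus) (hmb : 0 < mbar) :
    ∃ C : ℝ, ∀ N : ℕ, 2 ≤ N → ∀ m : ℕ → ℝ,
      (∀ x : ℕ, m x ∈ Set.Icc mminus mplus) →
      ∀ r p : ℝ → ℕ → ℝ, IsChainSolution N m r p →
      (∀ x : ℕ, 1 ≤ x → x ≤ N - 1 → r 0 x = rr ((x : ℝ) / N)) →
      (∀ x : ℕ, 1 ≤ x → x ≤ N → p 0 x = m x * pp ((x : ℝ) / N) / mbar) →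
      ∀ s : ℝ, 0 ≤ s →
        (∑ x ∈ Finset.Icc 1 (N - 1), (r s x) ^ 2 ≤ C * N) ∧
        (∑ x ∈ Finset.Icc 1 N, (p s x) ^ 2 ≤ C * N) ∧
        (∑ x ∈ Finset.Icc 1 N, (r s x - r s (x - 1)) ^ 2 ≤ C / N) ∧
        (∑ x ∈ Finset.Icc 1 (N - 1), (p s (x + 1) / m (x + 1) - p s x / m x) ^ 2 ≤ C / N) := by
  obtain ⟨Mr, hMr⟩ := isCompact_Icc.exists_bound_of_continuousOn hrrc.continuousOn
  obtain ⟨Mp, hMp⟩ := isCompact_Icc.exists_bound_of_continuousOn hppc.continuousOn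
  obtain ⟨Lr, hLr⟩ := hrrc.exists_lipschitzOnWith one_ne_zero (convex_Icc 0 1) isCompact_Icc
  obtain ⟨Lp, hLp⟩ := hppc.exists_lipschitzOnWith one_ne_zero (convex_Icc 0 1) isCompact_Icc
  set A := (mplus * Mp / mbar) ^ 2 / mminus + Mr ^ 2
  set B := (Lr : ℝ) ^ 2 / mminus + (Lp / mbar) ^ 2
  have hA : 0 ≤ A := by positivity
  have hB : 0 ≤ B := by positivity
  refine ⟨(1 + mplus) * (A + B), fun N _ m hm r p hsol hr0 hp0 s _ => ?_⟩
  have hE : chainEnergy N m (r s) (p s) ≤ (A + B) * N := calc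
    _ = chainEnergy N m (r 0) (p 0) := hsol.chainEnergy_eq s
    _ ≤ A * N := chainEnergy_le_of_sample hm0 hm hmb hMr hMp hr0 hp0
    _ ≤ (A + B) * N := by gcongr; linarith
  have hE' : chainEnergy N m (velocityDiff N m (p s)) (stretchDiff (r s)) ≤ (A + B) / N := calc
    _ = chainEnergy N m (velocityDiff N m (p 0)) (stretchDiff (r 0)) := hsol.diff.chainEnergy_eq s
    _ ≤ B / N := chainEnergy_diff_le_of_sample hm0 (fun x => (hm x).1) hmb hLr hLp
        (hsol.eq_sample_of_le hrr0 hrr1 hr0) hp0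
    _ ≤ (A + B) / N := by gcongr; linarith
  have hvelocity : ∑ x ∈ Icc 1 (N - 1), (p s (x + 1) / m (x + 1) - p s x / m x) ^ 2
      = ∑ x ∈ Icc 1 (N - 1), velocityDiff N m (p s) x ^ 2 :=
    sum_congr rfl fun x hx => by rw [velocityDiff_of_mem m (p s) hx]
  rw [mul_assoc, mul_div_assoc, hvelocity]
  obtain ⟨hr, hp⟩ := sum_sq_le_of_chainEnergy_le hm0 hm hE
  obtain ⟨hvel, hstretch⟩ := sum_sq_le_of_chainEnergy_le hm0 hm hE'
  exact ⟨hr, hp, hstretch, hvel⟩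

/-- a priori `L²` and `H¹` bounds on the averaged fields, uniformly in `N`, in
the mass configuration and in time. -/
theorem stmt1 (β rr pp : ℝ → ℝ)
    (hβc : ContinuousOn β (Set.Icc 0 1)) (hβpos : ∀ y ∈ Set.Icc (0:ℝ) 1, 0 < β y)
    (hrrc : ContDiffOn ℝ 1 rr (Set.Icc 0 1)) (hrr0 : rr 0 = 0) (hrr1 : rr 1 = 0)
    (hppc : ContDiffOn ℝ 1 pp (Set.Icc 0 1))
    (mminus mplus mbar : ℝ) (hm0 : 0 < mminus) (hmm : mminus ≤ mplus) (hmb : 0 < mbar) :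
    ∃ C : ℝ, ∀ N : ℕ, 2 ≤ N → ∀ m : ℕ → ℝ,
      (∀ x : ℕ, m x ∈ Set.Icc mminus mplus) →
      ∀ r p : ℝ → ℕ → ℝ, IsChainSolution N m r p →
      (∀ x : ℕ, 1 ≤ x → x ≤ N - 1 → r 0 x = rr ((x : ℝ) / N)) →
      (∀ x : ℕ, 1 ≤ x → x ≤ N → p 0 x = m x * pp ((x : ℝ) / N) / mbar) →
      ∀ s : ℝ, 0 ≤ s →
        (∑ x ∈ Finset.Icc 1 (N - 1), (r s x) ^ 2 ≤ C * N) ∧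
        (∑ x ∈ Finset.Icc 1 N, (p s x) ^ 2 ≤ C * N) ∧
        (∑ x ∈ Finset.Icc 1 N, (r s x - r s (x - 1)) ^ 2 ≤ C / N) ∧
        (∑ x ∈ Finset.Icc 1 (N - 1), (p s (x + 1) / m (x + 1) - p s x / m x) ^ 2 ≤ C / N) :=
  stmt1_general rr pp hrrc hrr0 hrr1 hppc mminus mplus mbar hm0 hmb
end

section
/- Let 0 < α < 1/2 and 2α < γ < 1, and assume the localization estimate: there exist C, c > 0 such that for all N and all x, y ∈ {1,…,N}, 𝖤( Σ_{k ∈ I(α)} |ψ^k_x ψ^k_y| ) ≤ C e^{−c|x−y|/N^{2α}}, where I(α) = (N^{1−α}, N−1] ∩ ℤ. Then there is a constant C(α,γ) (depending also on C and c) such that for all N: 𝖯( ∃ k ∈ I(α), ∃ x, y ∈ {1,…,N} with |x−y| ≥ N^γ, |ψ^k_x| ≥ N^{−1/γ} and |ψ^k_y| ≥ N^{−1/γ} ) ≤ C(α,γ) e^{−N^{(γ−2α)/2}}. -/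
open Finset Filter MeasureTheory ProbabilityTheory

/-!
Markov's inequality for each pair of sites at distance `≥ N^γ`, fed with the localization
estimate, and a union bound over the `≤ N²` such pairs bound the probability by
`N^{2 + 2/γ} · C e^{-c N^{γ-2α}} = O(e^{-N^{(γ-2α)/2}})`.

Markov's inequality needs the integrand to be measurable, which is not assumed of the modes.
Shooting from the first site writes `|ψ^k_x ψ^k_y|` as `|u_x u_y| / ∑_z m_z u_z²`, where
`u = P_x(ω_k²)` solves the recursion with `u_0 = u_1 = 1`; the `ω_k²` are the `N` distinct zeros,
in increasing order, of the polynomial `P_{N+1} - P_N` (of degree `≤ N`), and ordered zeros of a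
function continuous in `λ` and measurable in the masses are measurable.
-/

/-- Eigenmodes of the operator `M⁻¹(−Δ)` with free boundary conditions
(`ψ_0 = ψ_1`, `ψ_{N+1} = ψ_N`), normalized by `⟨ψ^j, Mψ^k⟩ = δ_{jk}`, with `ω_0 = 0` and
`ω_k > 0` for `1 ≤ k ≤ N−1`. -/
def IsEigenSystem (N : ℕ) (m : ℕ → ℝ) (ψ : ℕ → ℕ → ℝ) (W : ℕ → ℝ) : Prop :=
  (∀ k ≤ N - 1, ψ k 0 = ψ k 1 ∧ ψ k (N + 1) = ψ k N) ∧
  (∀ k ≤ N - 1, ∀ x : ℕ, 1 ≤ x → x ≤ N →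
    -(ψ k (x + 1) - 2 * ψ k x + ψ k (x - 1)) = (W k) ^ 2 * (m x * ψ k x)) ∧
  (∀ j ≤ N - 1, ∀ k ≤ N - 1,
    (∑ x ∈ Finset.Icc 1 N, m x * ψ j x * ψ k x) = if j = k then 1 else 0) ∧
  W 0 = 0 ∧ (∀ k : ℕ, 1 ≤ k → k ≤ N - 1 → 0 < W k)

open Polynomial in
/-- `(shootingPoly a x).eval λ` is the solution `u` of `-(u_{x+1} - 2 u_x + u_{x-1}) = λ a_x u_x`
with `u_0 = u_1 = 1`, as a polynomial in `λ`. -/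
noncomputable def shootingPoly (a : ℕ → ℝ) : ℕ → ℝ[X]
  | 0 => 1
  | 1 => 1
  | n + 2 => (2 - C (a (n + 1)) * X) * shootingPoly a (n + 1) - shootingPoly a n

namespace shootingPoly

variable {a : ℕ → ℝ}

@[simp]
theorem eval_zero (t : ℝ) : (shootingPoly a 0).eval t = 1 := by simp [shootingPoly]

@[simp]
theorem eval_one (t : ℝ) : (shootingPoly a 1).eval t = 1 := by simp [shootingPoly]

theorem eval_add_two (t : ℝ) (n : ℕ) :
    (shootingPoly a (n + 2)).eval t =
      2 * (shootingPoly a (n + 1)).eval t - (shootingPoly a n).eval t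
        - t * a (n + 1) * (shootingPoly a (n + 1)).eval t := by
  simp only [shootingPoly, Polynomial.eval_sub, Polynomial.eval_mul, Polynomial.eval_ofNat,
    Polynomial.eval_C, Polynomial.eval_X]
  ring

theorem natDegree_le (n : ℕ) : (shootingPoly a n).natDegree ≤ n - 1 := by
  induction n using Nat.strong_induction_on with
  | _ n ih =>
    match n with
    | 0 | 1 => simp [shootingPoly]
    | n + 2 =>
      have hlin : (2 - Polynomial.C (a (n + 1)) * Polynomial.X).natDegree ≤ 1 :=
        (Polynomial.natDegree_sub_le _ _).trans (by
          simpa using Polynomial.natDegree_C_mul_X_pow_le (a (n + 1)) 1)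
      have h1 := ih (n + 1) (by omega)
      have h0 := ih n (by omega)
      refine (Polynomial.natDegree_sub_le _ _).trans (max_le ?_ (by omega))
      exact Polynomial.natDegree_mul_le.trans (by omega)

theorem eval_pos_and_lt_of_neg (ha : ∀ x, 0 < a x) {t : ℝ} (ht : t < 0) (n : ℕ) :
    0 < (shootingPoly a (n + 1)).eval t ∧
      (shootingPoly a (n + 1)).eval t < (shootingPoly a (n + 2)).eval t := by
  induction n with
  | zero =>
    have := ha 1
    simp only [zero_add, eval_add_two, eval_one, eval_zero]
    constructor <;> nlinarith
  | succ n ih =>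
    obtain ⟨hpos, hlt⟩ := ih
    have hpos' : 0 < (shootingPoly a (n + 2)).eval t := hpos.trans hlt
    refine ⟨hpos', ?_⟩
    rw [eval_add_two t (n + 1)]
    nlinarith [mul_pos (mul_pos (neg_pos.2 ht) (ha (n + 2))) hpos']

theorem measurable_eval {Ω : Type*} [MeasurableSpace Ω] {m : ℕ → Ω → ℝ}
    (hm : ∀ i, Measurable (m i)) {L : Ω → ℝ} (hL : Measurable L) (n : ℕ) :
    Measurable fun ω => (shootingPoly (fun x => m x ω) n).eval (L ω) := by
  induction n using Nat.strong_induction_on with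
  | _ n ih =>
    match n with
    | 0 | 1 => simp
    | n + 2 =>
      simp only [eval_add_two]
      have h1 := ih (n + 1) (by omega)
      exact ((measurable_const.mul h1).sub (ih n (by omega))).sub ((hL.mul (hm _)).mul h1)

end shootingPoly

namespace IsEigenSystem

variable {N : ℕ} {a : ℕ → ℝ} {ψ : ℕ → ℕ → ℝ} {W : ℕ → ℝ}

theorem eq_mul_eval (h : IsEigenSystem N a ψ W) {k : ℕ} (hk : k ≤ N - 1) {x : ℕ}
    (hx : x ≤ N + 1) : ψ k x = ψ k 1 * (shootingPoly a x).eval (W k ^ 2) := by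
  induction x using Nat.strong_induction_on with
  | _ x ih =>
    match x with
    | 0 => simp [(h.1 k hk).1]
    | 1 => simp
    | x + 2 =>
      have hrec := h.2.1 k hk (x + 1) (by omega) (by omega)
      rw [Nat.add_sub_cancel] at hrec
      have hstep : ψ k (x + 2) = 2 * ψ k (x + 1) - ψ k x - W k ^ 2 * a (x + 1) * ψ k (x + 1) := by
        linarith
      rw [hstep, ih (x + 1) (by omega) (by omega), ih x (by omega) (by omega),
        shootingPoly.eval_add_two]
      ring

theorem sq_mul_sum_eq_one (h : IsEigenSystem N a ψ W) {k : ℕ} (hk : k ≤ N - 1) :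
    ψ k 1 ^ 2 * ∑ x ∈ Icc 1 N, a x * (shootingPoly a x).eval (W k ^ 2) ^ 2 = 1 := by
  have hnorm := h.2.2.1 k hk k hk
  rw [if_pos rfl] at hnorm
  rw [mul_sum, ← hnorm]
  refine sum_congr rfl fun x hx => ?_
  rw [h.eq_mul_eval (x := x) hk (by grind)]
  ring

theorem apply_one_ne_zero (h : IsEigenSystem N a ψ W) {k : ℕ} (hk : k ≤ N - 1) : ψ k 1 ≠ 0 := by
  intro h0
  simpa [h0] using h.sq_mul_sum_eq_one hk

theorem abs_mul_eq_div (h : IsEigenSystem N a ψ W) {k : ℕ} (hk : k ≤ N - 1) {x y : ℕ}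
    (hx : x ≤ N) (hy : y ≤ N) :
    |ψ k x * ψ k y| =
      |(shootingPoly a x).eval (W k ^ 2) * (shootingPoly a y).eval (W k ^ 2)| /
        ∑ z ∈ Icc 1 N, a z * (shootingPoly a z).eval (W k ^ 2) ^ 2 := by
  have hS := h.sq_mul_sum_eq_one hk
  have hS0 := right_ne_zero_of_mul_eq_one hS
  rw [eq_div_iff hS0, h.eq_mul_eval (x := x) hk (by omega), h.eq_mul_eval (x := y) hk (by omega),
    mul_mul_mul_comm, ← sq, abs_mul, abs_of_nonneg (sq_nonneg _), mul_right_comm, hS, one_mul]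

theorem sq_le_inv {mminus : ℝ} (hm0 : 0 < mminus) (ha : ∀ x, mminus ≤ a x)
    (h : IsEigenSystem N a ψ W) {k : ℕ} (hk : k ≤ N - 1) {x : ℕ} (hx : x ∈ Icc 1 N) :
    ψ k x ^ 2 ≤ mminus⁻¹ := by
  have hnorm := h.2.2.1 k hk k hk
  rw [if_pos rfl] at hnorm
  have hterm : a x * ψ k x * ψ k x ≤ 1 := by
    rw [← hnorm]
    refine single_le_sum (f := fun z => a z * ψ k z * ψ k z) (fun z _ => ?_) hx
    rw [mul_assoc]
    exact mul_nonneg (hm0.le.trans (ha z)) (mul_self_nonneg _)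
  rw [← one_div, le_div_iff₀ hm0]
  nlinarith [ha x, sq_nonneg (ψ k x)]

theorem abs_mul_le_inv {mminus : ℝ} (hm0 : 0 < mminus) (ha : ∀ x, mminus ≤ a x)
    (h : IsEigenSystem N a ψ W) {k : ℕ} (hk : k ≤ N - 1) {x y : ℕ} (hx : x ∈ Icc 1 N)
    (hy : y ∈ Icc 1 N) : |ψ k x * ψ k y| ≤ mminus⁻¹ := by
  have := h.sq_le_inv hm0 ha hk hx
  have := h.sq_le_inv hm0 ha hk hy
  rw [abs_le]
  constructor <;> nlinarith [sq_nonneg (ψ k x + ψ k y), sq_nonneg (ψ k x - ψ k y)]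

theorem eval_succ_eq (h : IsEigenSystem N a ψ W) {k : ℕ} (hk : k ≤ N - 1) :
    (shootingPoly a (N + 1)).eval (W k ^ 2) = (shootingPoly a N).eval (W k ^ 2) := by
  refine mul_left_cancel₀ (h.apply_one_ne_zero hk) ?_
  rw [← h.eq_mul_eval hk le_rfl, ← h.eq_mul_eval hk (by omega), (h.1 k hk).2]

theorem sq_strictMonoOn (h : IsEigenSystem N a ψ W)
    (hsorted : ∀ j k, j ≤ k → k ≤ N - 1 → W j ≤ W k) :
    StrictMonoOn (fun k => W k ^ 2) (Set.Iic (N - 1)) := by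
  intro j hj k hk hjk
  simp only [Set.mem_Iic] at hj hk
  have hW0 : 0 ≤ W j := by
    rcases Nat.eq_zero_or_pos j with rfl | hj0
    · exact h.2.2.2.1.ge
    · exact (h.2.2.2.2 j hj0 hj).le
  refine (pow_le_pow_left₀ hW0 (hsorted j k hjk.le hk) 2).lt_of_ne fun heq => ?_
  -- equal eigenvalues give proportional modes, contradicting orthogonality
  have horth := h.2.2.1 j hj k hk
  rw [if_neg hjk.ne] at horth
  have hsum : ∑ x ∈ Icc 1 N, a x * ψ j x * ψ k x =
      (ψ j 1 * ψ k 1) * ∑ x ∈ Icc 1 N, a x * (shootingPoly a x).eval (W k ^ 2) ^ 2 := by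
    rw [mul_sum]
    refine sum_congr rfl fun x hx => ?_
    rw [h.eq_mul_eval (x := x) hj (by grind), h.eq_mul_eval (x := x) hk (by grind), heq]
    ring
  rw [hsum] at horth
  exact mul_ne_zero (mul_ne_zero (h.apply_one_ne_zero hj) (h.apply_one_ne_zero hk))
    (right_ne_zero_of_mul_eq_one (h.sq_mul_sum_eq_one hk)) horth

/-- `P_{N+1} - P_N` has degree at most `N` and the `N` distinct roots `W k ^ 2`, so no others. -/
theorem exists_eq_sq_of_eval_eq (h : IsEigenSystem N a ψ W)
    (hsorted : ∀ j k, j ≤ k → k ≤ N - 1 → W j ≤ W k) (hN : 0 < N) (ha : ∀ x, 0 < a x) {t : ℝ}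
    (ht : (shootingPoly a (N + 1)).eval t = (shootingPoly a N).eval t) :
    ∃ k ≤ N - 1, W k ^ 2 = t := by
  by_contra! hne
  set Q := shootingPoly a (N + 1) - shootingPoly a N
  have hQ0 : Q ≠ 0 := by
    intro hQ
    have hlt := (shootingPoly.eval_pos_and_lt_of_neg ha (t := -1) (by norm_num) (N - 1)).2
    rw [show N - 1 + 1 = N by omega, show N - 1 + 2 = N + 1 by omega] at hlt
    have := congrArg (Polynomial.eval (-1)) hQ
    simp only [Q, Polynomial.eval_sub, Polynomial.eval_zero] at this
    linarith
  have hdeg : Q.natDegree ≤ N :=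
    (Polynomial.natDegree_sub_le _ _).trans
      (max_le (shootingPoly.natDegree_le _) ((shootingPoly.natDegree_le _).trans (by omega)))
  have hroots : insert t ((range N).image fun k => W k ^ 2) ⊆ Q.roots.toFinset := by
    intro r hr
    rw [Multiset.mem_toFinset, Polynomial.mem_roots hQ0, Polynomial.IsRoot.def]
    simp only [Q, Polynomial.eval_sub, sub_eq_zero]
    rcases mem_insert.1 hr with rfl | hr
    · exact ht
    · obtain ⟨k, hk, rfl⟩ := mem_image.1 hr
      exact h.eval_succ_eq (by grind)
  have hcard : (insert t ((range N).image fun k => W k ^ 2)).card = N + 1 := by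
    rw [card_insert_of_notMem (by grind), card_image_of_injOn, card_range]
    exact (h.sq_strictMonoOn hsorted).injOn.mono (by grind)
  have := (card_le_card hroots).trans (Multiset.toFinset_card_le _)
  have := Polynomial.card_roots' Q
  omega

end IsEigenSystem

theorem exists_rat_abs_lt_of_eq_zero {f : ℝ → ℝ} (hf : Continuous f) {z b : ℝ} (hz : f z = 0)
    (hbz : b < z) {ε : ℝ} (hε : 0 < ε) : ∃ q : ℚ, b < q ∧ (q : ℝ) < z ∧ |f q| < ε := by
  obtain ⟨δ, hδ, hfδ⟩ := Metric.continuous_iff.1 hf z ε hε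
  obtain ⟨q, hq1, hq2⟩ := exists_rat_btwn (max_lt hbz (sub_lt_self z hδ))
  refine ⟨q, (le_max_left _ _).trans_lt hq1, hq2, ?_⟩
  have hqz : dist (q : ℝ) z < δ := by
    rw [Real.dist_eq, abs_sub_lt_iff]
    constructor <;> linarith [le_max_right b (z - δ)]
  simpa [Real.dist_eq, hz] using hfδ q hqz

theorem exists_eq_zero_of_forall_abs_lt {f : ℝ → ℝ} (hf : Continuous f) {K : Set ℝ}
    (hK : IsCompact K) (happrox : ∀ i : ℕ, ∃ x ∈ K, |f x| < 1 / (i + 1)) : ∃ z ∈ K, f z = 0 := by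
  obtain ⟨x₀, hx₀, -⟩ := happrox 0
  obtain ⟨z, hz, hmin⟩ := hK.exists_isMinOn ⟨x₀, hx₀⟩ (continuous_abs.comp hf).continuousOn
  refine ⟨z, hz, abs_eq_zero.1 (le_antisymm (le_of_not_gt fun hpos => ?_) (abs_nonneg _))⟩
  obtain ⟨i, hi⟩ := exists_nat_one_div_lt hpos
  obtain ⟨x, hx, hfx⟩ := happrox i
  exact (hmin hx).not_gt (hfx.trans hi)

section Caratheodory

variable {Ω : Type*} [MeasurableSpace Ω] {Q : ℝ → Ω → ℝ}

/-- The zero is detected along rationals in `[a ω + 1/(j+1), t]`; compactness of that interval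
turns approximate zeros back into a zero. -/
theorem measurableSet_exists_zero_Ioc (hQ : ∀ t, Measurable (Q t))
    (hQc : ∀ ω, Continuous (Q · ω)) {a : Ω → ℝ} (ha : Measurable a) (t : ℝ) :
    MeasurableSet {ω | ∃ z ∈ Set.Ioc (a ω) t, Q z ω = 0} := by
  have hset : {ω | ∃ z ∈ Set.Ioc (a ω) t, Q z ω = 0} = ⋃ j : ℕ, ⋂ i : ℕ, ⋃ q : ℚ,
      {ω | a ω + 1 / (j + 1) ≤ q} ∩ {ω | (q : ℝ) ≤ t} ∩ {ω | |Q q ω| < 1 / (i + 1)} := by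
    ext ω
    simp only [Set.mem_ofPred_eq, Set.mem_iUnion, Set.mem_iInter, Set.mem_inter_iff]
    constructor
    · rintro ⟨z, ⟨haz, hzt⟩, hz⟩
      obtain ⟨j, hj⟩ := exists_nat_one_div_lt (sub_pos.2 haz)
      refine ⟨j, fun i => ?_⟩
      obtain ⟨q, hq1, hq2, hq3⟩ :=
        exists_rat_abs_lt_of_eq_zero (hQc ω) hz (by linarith : a ω + 1 / (j + 1) < z)
          (by positivity : (0 : ℝ) < 1 / (i + 1))
      exact ⟨q, ⟨hq1.le, hq2.le.trans hzt⟩, hq3⟩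
    · rintro ⟨j, hj⟩
      obtain ⟨z, ⟨hz1, hzt⟩, hz⟩ := exists_eq_zero_of_forall_abs_lt (hQc ω) isCompact_Icc
        fun i => by
          obtain ⟨q, ⟨hq1, hq2⟩, hq3⟩ := hj i
          exact ⟨q, ⟨hq1, hq2⟩, hq3⟩
      exact ⟨z, ⟨by linarith [(by positivity : (0 : ℝ) < 1 / (j + 1))], hzt⟩, hz⟩
  rw [hset]
  refine .iUnion fun j => .iInter fun i => .iUnion fun q => .inter (.inter ?_ ?_) ?_
  · exact measurableSet_le (ha.add_const _) measurable_const
  · exact .const _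
  · exact measurableSet_lt (hQ _).abs measurable_const

/-- `lam (k + 1) ω ≤ t` iff `Q · ω` has a zero in `(lam k ω, t]`. -/
theorem measurable_of_strictMonoOn_zeros (hQ : ∀ t, Measurable (Q t))
    (hQc : ∀ ω, Continuous (Q · ω)) {n : ℕ} {lam : ℕ → Ω → ℝ} (hlam0 : Measurable (lam 0))
    (hmono : ∀ ω, StrictMonoOn (lam · ω) (Set.Iic n))
    (hzero : ∀ ω, ∀ k ≤ n, Q (lam k ω) ω = 0)
    (hall : ∀ ω t, Q t ω = 0 → ∃ k ≤ n, lam k ω = t) {k : ℕ} (hk : k ≤ n) :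
    Measurable (lam k) := by
  induction k with
  | zero => exact hlam0
  | succ k ih =>
    refine measurable_of_Iic fun t => ?_
    convert measurableSet_exists_zero_Ioc hQ hQc (ih (by omega)) t using 1
    ext ω
    constructor
    · intro hle
      refine ⟨_, ⟨hmono ω (Set.mem_Iic.2 (by omega)) (Set.mem_Iic.2 hk) (by omega), hle⟩, ?_⟩
      exact hzero ω _ hk
    · rintro ⟨z, ⟨hkz, hzt⟩, hz⟩
      obtain ⟨l, hl, rfl⟩ := hall ω z hz
      have hkl := (hmono ω).lt_iff_lt (Set.mem_Iic.2 (by omega)) (Set.mem_Iic.2 hl) |>.1 hkz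
      exact ((hmono ω).le_iff_le (Set.mem_Iic.2 hk) (Set.mem_Iic.2 hl) |>.2 hkl).trans hzt

end Caratheodory

section RandomModes

variable {Ω : Type*} [MeasurableSpace Ω] {μ : Measure Ω} {m : ℕ → Ω → ℝ}
  {ψ : Ω → ℕ → ℕ → ℝ} {W : Ω → ℕ → ℝ} {N : ℕ}

theorem measurable_sq_eigenfreq (hm : ∀ i, Measurable (m i)) (hpos : ∀ i ω, 0 < m i ω)
    (hN : 0 < N) (heig : ∀ ω, IsEigenSystem N (fun x => m x ω) (ψ ω) (W ω))
    (hsorted : ∀ ω, ∀ j k, j ≤ k → k ≤ N - 1 → W ω j ≤ W ω k) {k : ℕ} (hk : k ≤ N - 1) :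
    Measurable fun ω => W ω k ^ 2 := by
  refine measurable_of_strictMonoOn_zeros
    (Q := fun t ω => (shootingPoly (fun x => m x ω) (N + 1)).eval t -
      (shootingPoly (fun x => m x ω) N).eval t)
    (fun t => (shootingPoly.measurable_eval hm measurable_const _).sub
      (shootingPoly.measurable_eval hm measurable_const _))
    (fun ω => (Polynomial.continuous _).sub (Polynomial.continuous _))
    (lam := fun k ω => W ω k ^ 2) ?_ (fun ω => (heig ω).sq_strictMonoOn (hsorted ω))
    (fun ω k hk => sub_eq_zero.2 ((heig ω).eval_succ_eq hk))
    (fun ω t ht => (heig ω).exists_eq_sq_of_eval_eq (hsorted ω) hN (hpos · ω) (sub_eq_zero.1 ht))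
    hk
  simp only [fun ω => (heig ω).2.2.2.1]
  exact measurable_const

theorem measurable_abs_mul_mode (hm : ∀ i, Measurable (m i)) (hpos : ∀ i ω, 0 < m i ω)
    (hN : 0 < N) (heig : ∀ ω, IsEigenSystem N (fun x => m x ω) (ψ ω) (W ω))
    (hsorted : ∀ ω, ∀ j k, j ≤ k → k ≤ N - 1 → W ω j ≤ W ω k) {k : ℕ} (hk : k ≤ N - 1)
    {x y : ℕ} (hx : x ≤ N) (hy : y ≤ N) : Measurable fun ω => |ψ ω k x * ψ ω k y| := by
  have hlam := measurable_sq_eigenfreq hm hpos hN heig hsorted hk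
  simp_rw [fun ω => (heig ω).abs_mul_eq_div hk hx hy]
  refine Measurable.div ?_ (Finset.measurable_sum _ fun z _ => ?_)
  · exact ((shootingPoly.measurable_eval hm hlam _).mul
      (shootingPoly.measurable_eval hm hlam _)).abs
  · exact (hm z).mul ((shootingPoly.measurable_eval hm hlam _).pow_const 2)

theorem integrable_sum_abs_mul_mode [IsFiniteMeasure μ] {mminus : ℝ} (hm : ∀ i, Measurable (m i))
    (hm0 : 0 < mminus) (hlow : ∀ i ω, mminus ≤ m i ω) (hN : 0 < N)
    (heig : ∀ ω, IsEigenSystem N (fun x => m x ω) (ψ ω) (W ω))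
    (hsorted : ∀ ω, ∀ j k, j ≤ k → k ≤ N - 1 → W ω j ≤ W ω k) {K : Finset ℕ}
    (hK : ∀ k ∈ K, k ≤ N - 1) {x y : ℕ} (hx : x ∈ Icc 1 N) (hy : y ∈ Icc 1 N) :
    Integrable (fun ω => ∑ k ∈ K, |ψ ω k x * ψ ω k y|) μ := by
  refine .of_bound (Finset.measurable_sum _ fun k hk => ?_).aestronglyMeasurable
    (K.card * mminus⁻¹) (ae_of_all _ fun ω => ?_)
  · exact measurable_abs_mul_mode hm (fun i ω => hm0.trans_le (hlow i ω)) hN heig hsorted (hK k hk)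
      (mem_Icc.1 hx).2 (mem_Icc.1 hy).2
  · rw [Real.norm_of_nonneg (sum_nonneg fun _ _ => abs_nonneg _), ← nsmul_eq_mul, ← sum_const]
    exact sum_le_sum fun k hk => (heig ω).abs_mul_le_inv hm0 (hlow · ω) (hK k hk) hx hy

end RandomModes

theorem measure_exists_le_le_ofReal {Ω ι : Type*} [MeasurableSpace Ω] {μ : Measure Ω}
    [IsFiniteMeasure μ] (s : Finset ι) {f : ι → Ω → ℝ} (hf0 : ∀ i ∈ s, 0 ≤ᵐ[μ] f i)
    (hfi : ∀ i ∈ s, Integrable (f i) μ) {ε B : ℝ} (hε : 0 < ε)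
    (hB : ∀ i ∈ s, ∫ ω, f i ω ∂μ ≤ B) :
    μ {ω | ∃ i ∈ s, ε ≤ f i ω} ≤ ENNReal.ofReal (s.card * (B / ε)) := by
  have hmarkov : ∀ i ∈ s, μ {ω | ε ≤ f i ω} ≤ ENNReal.ofReal (B / ε) := fun i hi => by
    rw [← ofReal_measureReal]
    refine ENNReal.ofReal_le_ofReal ((le_div_iff₀' hε).2 ?_)
    exact (mul_meas_ge_le_integral_of_nonneg (hf0 i hi) (hfi i hi) ε).trans (hB i hi)
  calc μ {ω | ∃ i ∈ s, ε ≤ f i ω} = μ (⋃ i ∈ s, {ω | ε ≤ f i ω}) := by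
        congr 1; ext ω; simp
    _ ≤ ∑ i ∈ s, μ {ω | ε ≤ f i ω} := measure_biUnion_finset_le s _
    _ ≤ ∑ _i ∈ s, ENNReal.ofReal (B / ε) := sum_le_sum hmarkov
    _ = ENNReal.ofReal (s.card * (B / ε)) := by
        rw [sum_const, nsmul_eq_mul, ENNReal.ofReal_mul (Nat.cast_nonneg _), ENNReal.ofReal_natCast]

/-- Since `√y ≤ c y / 2 + 1 / (2c)`, the factor `exp (-c y)` beats `exp (-√y)` by `exp (-c y / 2)`,
which absorbs any power of `y`. -/
theorem exists_rpow_mul_exp_neg_le (p : ℝ) {β c : ℝ} (hβ : 0 < β) (hc : 0 < c) :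
    ∃ C' : ℝ, ∀ n : ℕ,
      (n : ℝ) ^ p * Real.exp (-c * (n : ℝ) ^ β) ≤ C' * Real.exp (-(n : ℝ) ^ (β / 2)) := by
  have hlim : Tendsto (fun n : ℕ => ((n : ℝ) ^ β) ^ (p / β) * Real.exp (-(c / 2) * (n : ℝ) ^ β))
      atTop (nhds 0) :=
    (tendsto_rpow_mul_exp_neg_mul_atTop_nhds_zero _ _ (half_pos hc)).comp
      ((tendsto_rpow_atTop hβ).comp tendsto_natCast_atTop_atTop)
  obtain ⟨B, hB⟩ := hlim.bddAbove_range
  refine ⟨Real.exp (1 / (2 * c)) * B, fun n => ?_⟩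
  have hn : (0 : ℝ) ≤ n := n.cast_nonneg
  have hz : (n : ℝ) ^ β = ((n : ℝ) ^ (β / 2)) ^ 2 := by
    rw [← Real.rpow_natCast, ← Real.rpow_mul hn]; ring_nf
  have hpow : (n : ℝ) ^ p = ((n : ℝ) ^ β) ^ (p / β) := by
    rw [← Real.rpow_mul hn, mul_div_cancel₀ _ hβ.ne']
  have hexp : -c * (n : ℝ) ^ β ≤ 1 / (2 * c) + -(c / 2) * (n : ℝ) ^ β + -(n : ℝ) ^ (β / 2) := by
    have hsq : 0 ≤ (c * (n : ℝ) ^ (β / 2) - 1) ^ 2 / (2 * c) := by positivity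
    have hexpand : (c * (n : ℝ) ^ (β / 2) - 1) ^ 2 / (2 * c) =
        1 / (2 * c) + c / 2 * ((n : ℝ) ^ (β / 2)) ^ 2 - (n : ℝ) ^ (β / 2) := by
      field_simp; ring
    rw [hz]
    linarith
  calc (n : ℝ) ^ p * Real.exp (-c * (n : ℝ) ^ β)
      ≤ ((n : ℝ) ^ β) ^ (p / β) * (Real.exp (1 / (2 * c)) *
          Real.exp (-(c / 2) * (n : ℝ) ^ β) * Real.exp (-(n : ℝ) ^ (β / 2))) := by
        rw [hpow, ← Real.exp_add, ← Real.exp_add]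
        gcongr
    _ = Real.exp (1 / (2 * c)) * (((n : ℝ) ^ β) ^ (p / β) * Real.exp (-(c / 2) * (n : ℝ) ^ β)) *
          Real.exp (-(n : ℝ) ^ (β / 2)) := by ring
    _ ≤ Real.exp (1 / (2 * c)) * B * Real.exp (-(n : ℝ) ^ (β / 2)) := by
        gcongr
        exact hB (Set.mem_range_self n)

theorem mul_self_le_sum_abs_mul {K : Finset ℕ} {v : ℕ → ℕ → ℝ} {k x y : ℕ} (hk : k ∈ K) {t : ℝ}
    (ht : 0 ≤ t) (hx : t ≤ |v k x|) (hy : t ≤ |v k y|) : t * t ≤ ∑ k ∈ K, |v k x * v k y| := by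
  calc t * t ≤ |v k x * v k y| := by rw [abs_mul]; exact mul_le_mul hx hy ht (abs_nonneg _)
    _ ≤ _ := single_le_sum (f := fun k => |v k x * v k y|) (fun _ _ => abs_nonneg _) hk

theorem exp_neg_mul_div_rpow_le {N d c γ δ : ℝ} (hN : 0 < N) (hc : 0 ≤ c) (hd : N ^ γ ≤ d) :
    Real.exp (-c * d / N ^ δ) ≤ Real.exp (-c * N ^ (γ - δ)) := by
  rw [Real.exp_le_exp, Real.rpow_sub hN, mul_div_assoc]
  exact mul_le_mul_of_nonpos_left (by gcongr) (by linarith)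

theorem natCast_mul_div_rpow_neg_le {s N : ℕ} (hN : 0 < N) (hs : s ≤ N ^ 2) {x q : ℝ}
    (hx : 0 ≤ x) : (s : ℝ) * (x / (N : ℝ) ^ (-q)) ≤ (N : ℝ) ^ (2 + q) * x := by
  have hN0 : (0 : ℝ) < N := by exact_mod_cast hN
  rw [Real.rpow_neg hN0.le, div_inv_eq_mul, Real.rpow_add hN0, Real.rpow_two, mul_right_comm,
    ← mul_assoc]
  gcongr
  exact_mod_cast hs

open scoped Classical in
theorem stmt18_general
    {Ω : Type*} [MeasurableSpace Ω] (μ : Measure Ω) [IsProbabilityMeasure μ]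
    (mminus mplus : ℝ) (hm0 : 0 < mminus)
    (m : ℕ → Ω → ℝ) (hmeas : ∀ i, Measurable (m i))
    (hbdd : ∀ i ω, m i ω ∈ Set.Icc mminus mplus)
    -- the (random) eigenmodes, sorted by increasing eigenfrequency
    (ψ : (N : ℕ) → Ω → ℕ → ℕ → ℝ) (W : (N : ℕ) → Ω → ℕ → ℝ)
    (heigen : ∀ N : ℕ, 2 ≤ N → ∀ ω, IsEigenSystem N (fun x => m x ω) (ψ N ω) (W N ω))
    (hsorted : ∀ N : ℕ, 2 ≤ N → ∀ ω, ∀ j k : ℕ, j ≤ k → k ≤ N - 1 → W N ω j ≤ W N ω k)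
    (α γ : ℝ) (hγ1 : 2 * α < γ)
    (C c : ℝ) (hC : 0 < C) (hc : 0 < c)
    (hloc : ∀ N : ℕ, 2 ≤ N → ∀ x ∈ Finset.Icc 1 N, ∀ y ∈ Finset.Icc 1 N,
      (∫ ω, (∑ k ∈ (Finset.Icc 1 (N - 1)).filter
          (fun k : ℕ => (N : ℝ) ^ ((1 : ℝ) - α) < (k : ℝ)),
        |ψ N ω k x * ψ N ω k y|) ∂μ)
        ≤ C * Real.exp (-c * |(x : ℝ) - (y : ℝ)| / (N : ℝ) ^ (2 * α))) :
    ∃ C' : ℝ, ∀ N : ℕ, 2 ≤ N →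
      μ {ω | ∃ k ∈ (Finset.Icc 1 (N - 1)).filter
            (fun k : ℕ => (N : ℝ) ^ ((1 : ℝ) - α) < (k : ℝ)),
          ∃ x y : ℕ, 1 ≤ x ∧ x ≤ N ∧ 1 ≤ y ∧ y ≤ N ∧
            (N : ℝ) ^ γ ≤ |(x : ℝ) - (y : ℝ)| ∧
            (N : ℝ) ^ (-(1 : ℝ) / γ) ≤ |ψ N ω k x| ∧
            (N : ℝ) ^ (-(1 : ℝ) / γ) ≤ |ψ N ω k y|}
        ≤ ENNReal.ofReal (C' * Real.exp (-(N : ℝ) ^ ((γ - 2 * α) / 2))) := by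
  obtain ⟨C'', hC''⟩ := exists_rpow_mul_exp_neg_le (2 + 2 / γ) (by linarith : 0 < γ - 2 * α) hc
  refine ⟨C * C'', fun N hN => ?_⟩
  have hN0 : (0 : ℝ) < N := by positivity
  set K := (Icc 1 (N - 1)).filter fun k : ℕ => (N : ℝ) ^ ((1 : ℝ) - α) < (k : ℝ)
  set s := (Icc 1 N ×ˢ Icc 1 N).filter fun p : ℕ × ℕ => (N : ℝ) ^ γ ≤ |(p.1 : ℝ) - p.2|
  set f : ℕ × ℕ → Ω → ℝ := fun p ω => ∑ k ∈ K, |ψ N ω k p.1 * ψ N ω k p.2|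
  have hK : ∀ k ∈ K, k ≤ N - 1 := fun k hk => by grind
  have hmem : ∀ p ∈ s, (p.1 ∈ Icc 1 N ∧ p.2 ∈ Icc 1 N) ∧ (N : ℝ) ^ γ ≤ |(p.1 : ℝ) - p.2| :=
    fun p hp => by simpa [s] using hp
  have hthreshold : (N : ℝ) ^ (-(2 / γ)) = (N : ℝ) ^ (-(1 : ℝ) / γ) * (N : ℝ) ^ (-(1 : ℝ) / γ) := by
    rw [← Real.rpow_add hN0]; ring_nf
  calc _ ≤ μ {ω | ∃ p ∈ s, (N : ℝ) ^ (-(2 / γ)) ≤ f p ω} := by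
        refine measure_mono fun ω ⟨k, hk, x, y, hx1, hxN, hy1, hyN, hdist, hψx, hψy⟩ => ?_
        refine ⟨(x, y), by simp [s, *], ?_⟩
        rw [hthreshold]
        exact mul_self_le_sum_abs_mul hk (by positivity) hψx hψy
    _ ≤ ENNReal.ofReal
          (s.card * (C * Real.exp (-c * (N : ℝ) ^ (γ - 2 * α)) / (N : ℝ) ^ (-(2 / γ)))) :=
        measure_exists_le_le_ofReal s
          (fun p _ => ae_of_all _ fun ω => sum_nonneg fun _ _ => abs_nonneg _)
          (fun p hp => integrable_sum_abs_mul_mode hmeas hm0 (fun i ω => (hbdd i ω).1) (by omega)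
            (heigen N hN) (hsorted N hN) hK (hmem p hp).1.1 (hmem p hp).1.2)
          (by positivity)
          (fun p hp => (hloc N hN _ (hmem p hp).1.1 _ (hmem p hp).1.2).trans
            (mul_le_mul_of_nonneg_left (exp_neg_mul_div_rpow_le hN0 hc.le (hmem p hp).2) hC.le))
    _ ≤ _ := by
        refine ENNReal.ofReal_le_ofReal
          ((natCast_mul_div_rpow_neg_le (by omega) ?_ (by positivity)).trans ?_)
        · exact (card_filter_le _ _).trans (by simp [sq])
        · rw [mul_left_comm, mul_assoc]
          exact mul_le_mul_of_nonneg_left (hC'' N) hC.le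

open scoped Classical in
/-- quantitative probability bound for the delocalization event.  Assuming
the localization estimate `𝖤( Σ_{k ∈ I(α)} |ψ^k_x ψ^k_y| ) ≤ C e^{−c|x−y|/N^{2α}}` with
`I(α) = (N^{1−α}, N−1] ∩ ℤ`, the probability that some mode `k ∈ I(α)` is at least
`N^{−1/γ}` at two sites at distance at least `N^γ` is at most `C(α,γ) e^{−N^{(γ−2α)/2}}`. -/
theorem stmt18
    {Ω : Type*} [MeasurableSpace Ω] (μ : Measure Ω) [IsProbabilityMeasure μ]
    (mminus mplus : ℝ) (hm0 : 0 < mminus)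
    (m : ℕ → Ω → ℝ) (hmeas : ∀ i, Measurable (m i))
    (hindep : iIndepFun m μ)
    (hident : ∀ i j, IdentDistrib (m i) (m j) μ μ)
    (hbdd : ∀ i ω, m i ω ∈ Set.Icc mminus mplus)
    -- the (random) eigenmodes, sorted by increasing eigenfrequency
    (ψ : (N : ℕ) → Ω → ℕ → ℕ → ℝ) (W : (N : ℕ) → Ω → ℕ → ℝ)
    (heigen : ∀ N : ℕ, 2 ≤ N → ∀ ω, IsEigenSystem N (fun x => m x ω) (ψ N ω) (W N ω))
    (hsorted : ∀ N : ℕ, 2 ≤ N → ∀ ω, ∀ j k : ℕ, j ≤ k → k ≤ N - 1 → W N ω j ≤ W N ω k)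
    (α γ : ℝ) (hα0 : 0 < α) (hα : α < 1 / 2) (hγ1 : 2 * α < γ) (hγ2 : γ < 1)
    (C c : ℝ) (hC : 0 < C) (hc : 0 < c)
    (hloc : ∀ N : ℕ, 2 ≤ N → ∀ x ∈ Finset.Icc 1 N, ∀ y ∈ Finset.Icc 1 N,
      (∫ ω, (∑ k ∈ (Finset.Icc 1 (N - 1)).filter
          (fun k : ℕ => (N : ℝ) ^ ((1 : ℝ) - α) < (k : ℝ)),
        |ψ N ω k x * ψ N ω k y|) ∂μ)
        ≤ C * Real.exp (-c * |(x : ℝ) - (y : ℝ)| / (N : ℝ) ^ (2 * α))) :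
    ∃ C' : ℝ, ∀ N : ℕ, 2 ≤ N →
      μ {ω | ∃ k ∈ (Finset.Icc 1 (N - 1)).filter
            (fun k : ℕ => (N : ℝ) ^ ((1 : ℝ) - α) < (k : ℝ)),
          ∃ x y : ℕ, 1 ≤ x ∧ x ≤ N ∧ 1 ≤ y ∧ y ≤ N ∧
            (N : ℝ) ^ γ ≤ |(x : ℝ) - (y : ℝ)| ∧
            (N : ℝ) ^ (-(1 : ℝ) / γ) ≤ |ψ N ω k x| ∧
            (N : ℝ) ^ (-(1 : ℝ) / γ) ≤ |ψ N ω k y|}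
        ≤ ENNReal.ofReal (C' * Real.exp (-(N : ℝ) ^ ((γ - 2 * α) / 2))) :=
  stmt18_general μ mminus mplus hm0 m hmeas hbdd ψ W heigen hsorted α γ hγ1 C c hC hc hloc
end
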